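/- arXiv:1304.3282 — 5 statements merged into one kernel-verified Lean document; each statement's English description precedes it below -/
import Mathlib

section
/- Let k ≥ 2 be an integer and let n, g, w, t be positive integers. If there exist a k-SCHGDD of type (n, (gw)^t) and a k-SCHGDD of type (n, g^w), then there exists a k-SCHGDD of type (n, g^{wt}). -/
/-- A `k`-SCHGDD of type `(n, m^t)`: a finite family of `k`-element base blocks in
`Fin n × ZMod (m*t)` such that no block has two points in the same group (same first
coordinate), and for every ordered pair `i ≠ j` the difference list `Δ_{ij}` covers
`ZMod (m*t)` minus the subgroup generated by `t` exactly once, hitting no element of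
that subgroup. -/
def IsSCHGDD (k n m t : ℕ) (B : Finset (Finset (Fin n × ZMod (m * t)))) : Prop :=
  (∀ b ∈ B, b.card = k) ∧
  (∀ b ∈ B, ∀ p ∈ b, ∀ q ∈ b, p.1 = q.1 → p = q) ∧
  (∀ i j : Fin n, i ≠ j → ∀ z : ZMod (m * t),
    (z ∈ AddSubgroup.zmultiples ((t : ZMod (m * t))) →
      (∑ b ∈ B, ((b ×ˢ b).filter
        (fun pq => pq.1.1 = i ∧ pq.2.1 = j ∧ pq.1.2 - pq.2.2 = z)).card) = 0) ∧
    (z ∉ AddSubgroup.zmultiples ((t : ZMod (m * t))) →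
      (∑ b ∈ B, ((b ×ˢ b).filter
        (fun pq => pq.1.1 = i ∧ pq.2.1 = j ∧ pq.1.2 - pq.2.2 = z)).card) = 1))

/-- Existence of a `k`-SCHGDD of type `(n, m^t)`. -/
def ExistsSCHGDD (k n m t : ℕ) : Prop :=
  ∃ B : Finset (Finset (Fin n × ZMod (m * t))), IsSCHGDD k n m t B

/-!
Multiplication by `t` embeds `ZMod (g * w)` onto the hole `⟨t⟩` of `ZMod (g * w * t)`, carrying
the hole `⟨w⟩` onto `⟨w * t⟩`. The first design covers every difference outside `⟨t⟩` once and
none inside; the image of the second covers every difference in `⟨t⟩ ∖ ⟨w * t⟩` once and nothing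
else, so together they form a design with hole `⟨w * t⟩`. The two families share no block: a
block of the first has `k ≥ 2` points and hence a difference outside `⟨t⟩`, while all
differences of a transported block lie in `⟨t⟩`.
-/

open Finset AddSubgroup

namespace ZMod

def scaleHom (m t : ℕ) : ZMod m →+ ZMod (m * t) :=
  lift m ⟨zmultiplesHom _ (t : ZMod (m * t)), by
    rw [zmultiplesHom_apply, natCast_zsmul, nsmul_eq_mul, ← Nat.cast_mul, natCast_self]⟩

variable {m t : ℕ}

theorem scaleHom_intCast (c : ℤ) : scaleHom m t c = c • (t : ZMod (m * t)) :=
  lift_coe _ _ c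

theorem scaleHom_injective (ht : t ≠ 0) : Function.Injective (scaleHom m t) := by
  rw [injective_iff_map_eq_zero]
  intro x hx
  obtain ⟨c, rfl⟩ := intCast_surjective x
  rw [scaleHom_intCast, zsmul_eq_mul, ← Int.cast_natCast, ← Int.cast_mul,
    intCast_zmod_eq_zero_iff_dvd, Nat.cast_mul] at hx
  rw [intCast_zmod_eq_zero_iff_dvd]
  exact (mul_dvd_mul_iff_right (Int.natCast_ne_zero.mpr ht)).mp hx

theorem range_scaleHom : (scaleHom m t).range = zmultiples (t : ZMod (m * t)) := by
  ext z
  constructor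
  · rintro ⟨x, rfl⟩
    obtain ⟨c, rfl⟩ := intCast_surjective x
    rw [scaleHom_intCast]
    exact zsmul_mem (mem_zmultiples _) c
  · rintro ⟨c, rfl⟩
    exact ⟨c, scaleHom_intCast c⟩

theorem map_zmultiples_scaleHom (w : ℕ) :
    (zmultiples (w : ZMod m)).map (scaleHom m t) = zmultiples ((w * t : ℕ) : ZMod (m * t)) := by
  rw [AddMonoidHom.map_zmultiples, ← Int.cast_natCast, scaleHom_intCast, natCast_zsmul,
    nsmul_eq_mul, Nat.cast_mul]

end ZMod

section DifferenceFamilies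

variable {n k : ℕ} {G H : Type*} [AddCommGroup G] [DecidableEq G] [AddCommGroup H]

def diffCount (B : Finset (Finset (Fin n × G))) (i j : Fin n) (z : G) : ℕ :=
  ∑ b ∈ B, ((b ×ˢ b).filter (fun pq => pq.1.1 = i ∧ pq.2.1 = j ∧ pq.1.2 - pq.2.2 = z)).card

structure IsHoleyDiffFamily (k : ℕ) (S : AddSubgroup G) (B : Finset (Finset (Fin n × G))) :
    Prop where
  card_eq : ∀ b ∈ B, b.card = k
  eq_of_fst_eq : ∀ b ∈ B, ∀ p ∈ b, ∀ q ∈ b, p.1 = q.1 → p = q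
  diffCount_eq : ∀ i j, i ≠ j → ∀ z,
    (z ∈ S → diffCount B i j z = 0) ∧ (z ∉ S → diffCount B i j z = 1)

theorem isSCHGDD_iff {m t : ℕ} {B : Finset (Finset (Fin n × ZMod (m * t)))} :
    IsSCHGDD k n m t B ↔ IsHoleyDiffFamily k (zmultiples (t : ZMod (m * t))) B :=
  ⟨fun ⟨h₁, h₂, h₃⟩ => ⟨h₁, h₂, h₃⟩, fun ⟨h₁, h₂, h₃⟩ => ⟨h₁, h₂, h₃⟩⟩

theorem IsHoleyDiffFamily.sub_notMem {S : AddSubgroup G} {B : Finset (Finset (Fin n × G))}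
    (h : IsHoleyDiffFamily k S B) {b : Finset (Fin n × G)} (hb : b ∈ B) {p q : Fin n × G}
    (hp : p ∈ b) (hq : q ∈ b) (hpq : p ≠ q) : p.2 - q.2 ∉ S := by
  intro hS
  have hne : p.1 ≠ q.1 := fun h' => hpq (h.eq_of_fst_eq b hb p hp q hq h')
  have hzero := (h.diffCount_eq p.1 q.1 hne _).1 hS
  rw [diffCount, sum_eq_zero_iff] at hzero
  have hempty := card_eq_zero.mp (hzero b hb)
  exact filter_eq_empty_iff.mp hempty (mem_product.mpr ⟨hp, hq⟩ : (p, q) ∈ b ×ˢ b) ⟨rfl, rfl, rfl⟩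

def liftBlocks (φ : H →+ G) (B : Finset (Finset (Fin n × H))) : Finset (Finset (Fin n × G)) :=
  B.image (Finset.image (Prod.map id φ))

variable {φ : H →+ G}

theorem sub_mem_range_of_mem_liftBlocks {B : Finset (Finset (Fin n × H))}
    {b : Finset (Fin n × G)} (hb : b ∈ liftBlocks φ B) {p q : Fin n × G} (hp : p ∈ b)
    (hq : q ∈ b) : p.2 - q.2 ∈ φ.range := by
  obtain ⟨b₀, -, rfl⟩ := mem_image.mp hb
  obtain ⟨p₀, -, rfl⟩ := mem_image.mp hp
  obtain ⟨q₀, -, rfl⟩ := mem_image.mp hq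
  exact ⟨p₀.2 - q₀.2, by simp⟩

theorem diffCount_liftBlocks (hφ : Function.Injective φ) (B : Finset (Finset (Fin n × H)))
    (i j : Fin n) (z : G) :
    diffCount (liftBlocks φ B) i j z = ∑ b ∈ B,
      ((b ×ˢ b).filter (fun pq => pq.1.1 = i ∧ pq.2.1 = j ∧ φ (pq.1.2 - pq.2.2) = z)).card := by
  have hpt : Function.Injective (Prod.map id φ : Fin n × H → Fin n × G) :=
    Function.injective_id.prodMap hφ
  rw [diffCount, liftBlocks, sum_image fun _ _ _ _ h => image_injective hpt h]
  refine sum_congr rfl fun b _ => ?_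
  rw [← prodMap_image_product, filter_image, card_image_of_injective _ (hpt.prodMap hpt)]
  congr 1
  exact filter_congr fun pq _ => by simp [map_sub]

theorem diffCount_liftBlocks_apply [DecidableEq H] (hφ : Function.Injective φ)
    (B : Finset (Finset (Fin n × H))) (i j : Fin n) (x : H) :
    diffCount (liftBlocks φ B) i j (φ x) = diffCount B i j x := by
  rw [diffCount_liftBlocks hφ, diffCount]
  simp only [hφ.eq_iff]

theorem diffCount_liftBlocks_of_notMem_range (hφ : Function.Injective φ)
    (B : Finset (Finset (Fin n × H))) (i j : Fin n) {z : G} (hz : z ∉ φ.range) :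
    diffCount (liftBlocks φ B) i j z = 0 := by
  rw [diffCount_liftBlocks hφ]
  refine sum_eq_zero fun b _ => card_eq_zero.mpr (filter_eq_empty_iff.mpr ?_)
  rintro pq - ⟨-, -, rfl⟩
  exact hz ⟨_, rfl⟩

theorem IsHoleyDiffFamily.disjoint_liftBlocks (hk : 2 ≤ k) {S : AddSubgroup G}
    {B₁ : Finset (Finset (Fin n × G))} (h₁ : IsHoleyDiffFamily k S B₁) (hrange : φ.range = S)
    (B₂ : Finset (Finset (Fin n × H))) : Disjoint B₁ (liftBlocks φ B₂) := by
  refine disjoint_left.mpr fun b hb₁ hb₂ => ?_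
  obtain ⟨p, hp, q, hq, hpq⟩ := one_lt_card.mp (show 1 < b.card by rw [h₁.card_eq b hb₁]; omega)
  exact h₁.sub_notMem hb₁ hp hq hpq (hrange ▸ sub_mem_range_of_mem_liftBlocks hb₂ hp hq)

theorem IsHoleyDiffFamily.union_liftBlocks [DecidableEq H] (hk : 2 ≤ k) {S : AddSubgroup G}
    {T : AddSubgroup H} {B₁ : Finset (Finset (Fin n × G))} {B₂ : Finset (Finset (Fin n × H))}
    (h₁ : IsHoleyDiffFamily k S B₁) (h₂ : IsHoleyDiffFamily k T B₂) (hφ : Function.Injective φ)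
    (hrange : φ.range = S) : IsHoleyDiffFamily k (T.map φ) (B₁ ∪ liftBlocks φ B₂) := by
  have hpt : Function.Injective (Prod.map id φ : Fin n × H → Fin n × G) :=
    Function.injective_id.prodMap hφ
  refine ⟨fun b hb => ?_, fun b hb => ?_, fun i j hij z => ?_⟩
  · rcases mem_union.mp hb with hb | hb
    · exact h₁.card_eq b hb
    · obtain ⟨b₀, hb₀, rfl⟩ := mem_image.mp hb
      rw [card_image_of_injective _ hpt, h₂.card_eq b₀ hb₀]
  · rcases mem_union.mp hb with hb | hb
    · exact h₁.eq_of_fst_eq b hb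
    · obtain ⟨b₀, hb₀, rfl⟩ := mem_image.mp hb
      simp only [mem_image]
      rintro _ ⟨p, hp, rfl⟩ _ ⟨q, hq, rfl⟩ hpq
      rw [h₂.eq_of_fst_eq b₀ hb₀ p hp q hq hpq]
  rw [diffCount, sum_union (h₁.disjoint_liftBlocks hk hrange B₂), ← diffCount, ← diffCount]
  by_cases hzS : z ∈ S
  · obtain ⟨x, rfl⟩ := hrange ▸ hzS
    rw [(h₁.diffCount_eq i j hij _).1 hzS, diffCount_liftBlocks_apply hφ, zero_add,
      mem_map_iff_mem hφ]
    exact h₂.diffCount_eq i j hij x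
  · have hzT : z ∉ T.map φ := fun h => hzS (hrange ▸ map_le_range φ T h)
    rw [(h₁.diffCount_eq i j hij z).2 hzS,
      diffCount_liftBlocks_of_notMem_range hφ B₂ i j (hrange ▸ hzS)]
    exact ⟨fun h => absurd h hzT, fun _ => rfl⟩

end DifferenceFamilies

theorem schgdd_filling_general (k n g w t : ℕ) (hk : 2 ≤ k) (ht : 0 < t)
    (h1 : ExistsSCHGDD k n (g * w) t) (h2 : ExistsSCHGDD k n g w) :
    ExistsSCHGDD k n g (w * t) := by
  obtain ⟨B₁, h₁⟩ := h1
  obtain ⟨B₂, h₂⟩ := h2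
  rw [isSCHGDD_iff] at h₁ h₂
  simp only [ExistsSCHGDD, isSCHGDD_iff]
  rw [← mul_assoc, ← ZMod.map_zmultiples_scaleHom]
  exact ⟨_, h₁.union_liftBlocks hk h₂ (ZMod.scaleHom_injective ht.ne') ZMod.range_scaleHom⟩

/-- Construction 3.1: if there exist a `k`-SCHGDD of type `(n, (g*w)^t)` and a
`k`-SCHGDD of type `(n, g^w)`, then there exists a `k`-SCHGDD of type `(n, g^(w*t))`. -/
theorem schgdd_filling (k n g w t : ℕ) (hk : 2 ≤ k) (hn : 0 < n) (hg : 0 < g)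
    (hw : 0 < w) (ht : 0 < t)
    (h1 : ExistsSCHGDD k n (g * w) t) (h2 : ExistsSCHGDD k n g w) :
    ExistsSCHGDD k n g (w * t) :=
  schgdd_filling_general k n g w t hk ht h1 h2
end

section
/- Let k ≥ 2 be an integer and let n, w, t, h, g be positive integers with gcd(wt, hg) = 1. If there exist a k-SCHGDD of type (n, w^t), a k-SCHGDD of type (n, (hw)^t), and a (k, hg; h)-CHDM, then there exists a k-SCHGDD of type (n, (hgw)^t). -/
open Finset AddSubgroup

lemma aux_mem_zmultiples_iff {t N : ℕ} [NeZero N] (htN : t ∣ N) (z : ZMod N) :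
    z ∈ AddSubgroup.zmultiples ((t : ZMod N)) ↔ t ∣ z.val := by
  constructor
  · rintro ⟨m, rfl⟩
    set x := m • (t : ZMod N) with hxdef
    have h0 : ((m * t - (x.val : ℤ) : ℤ) : ZMod N) = 0 := by
      push_cast
      rw [show ((x.val : ℕ) : ZMod N) = x from ZMod.natCast_rightInverse x, hxdef,
        zsmul_eq_mul]
      ring
    have hdvd : (N : ℤ) ∣ m * t - (x.val : ℤ) :=
      (ZMod.intCast_zmod_eq_zero_iff_dvd _ N).mp h0
    have ht2 : (t : ℤ) ∣ (x.val : ℤ) := by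
      have h1 : (t : ℤ) ∣ (N : ℤ) := Int.natCast_dvd_natCast.mpr htN
      have h2 : (t : ℤ) ∣ m * t - (x.val : ℤ) := h1.trans hdvd
      have h3 : (t : ℤ) ∣ m * t := dvd_mul_left (t:ℤ) m
      have := dvd_sub h3 h2
      simpa using this
    exact_mod_cast ht2
  · rintro ⟨c, hc⟩
    refine ⟨(c : ℤ), ?_⟩
    have : ((z.val : ℕ) : ZMod N) = z := ZMod.natCast_rightInverse z
    show (c : ℤ) • (t : ZMod N) = z
    rw [← this, hc, zsmul_eq_mul]
    push_cast
    ring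

lemma aux_mem_zmultiples_castHom_iff {t M N : ℕ} [NeZero N] [NeZero M] (ht : t ∣ M)
    (hMN : M ∣ N) (z : ZMod N) :
    z ∈ AddSubgroup.zmultiples ((t : ZMod N)) ↔
      ZMod.castHom hMN (ZMod M) z ∈ AddSubgroup.zmultiples ((t : ZMod M)) := by
  rw [aux_mem_zmultiples_iff (ht.trans hMN), aux_mem_zmultiples_iff ht]
  have hval : (ZMod.castHom hMN (ZMod M) z).val = z.val % M := by
    rw [ZMod.castHom_apply, ← ZMod.natCast_val, ZMod.val_natCast]
  rw [hval, Nat.dvd_mod_iff ht]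


/-- row index of a point in a block -/
noncomputable def SCHrow {α : Type*} [DecidableEq α] (b : Finset α) (p : α) : ℕ :=
  if hp : p ∈ b then (b.equivFin ⟨p, hp⟩ : ℕ) else 0

/-- entry of the matrix `D` at row `s` (as a natural number) and column `c` -/
noncomputable def SCHD {k q : ℕ} {β : Type*} (D : Fin k → β → ZMod q)
    (s : ℕ) (c : β) : ZMod q :=
  if hs : s < k then D ⟨s, hs⟩ c else 0



/-- A `(k, w*t; w)`-CHDM: a `k × w*(t-1)` matrix with entries in `ZMod (w*t)` such that
for any two distinct rows the column-wise differences cover `ZMod (w*t)` minus the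
subgroup generated by `t` exactly once, and hit no element of that subgroup. -/
def IsCHDM (k w t : ℕ) (D : Fin k → Fin (w * (t - 1)) → ZMod (w * t)) : Prop :=
  ∀ x y : Fin k, x ≠ y → ∀ z : ZMod (w * t),
    (z ∈ AddSubgroup.zmultiples ((t : ZMod (w * t))) →
      (Finset.univ.filter (fun j => D x j - D y j = z)).card = 0) ∧
    (z ∉ AddSubgroup.zmultiples ((t : ZMod (w * t))) →
      (Finset.univ.filter (fun j => D x j - D y j = z)).card = 1)

/-- Existence of a `(k, w*t; w)`-CHDM. -/
def ExistsCHDM (k w t : ℕ) : Prop :=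
  ∃ D : Fin k → Fin (w * (t - 1)) → ZMod (w * t), IsCHDM k w t D

/-- Construction 3.5: let `gcd(w*t, h*g) = 1`. If there exist a `k`-SCHGDD of type
`(n, w^t)`, a `k`-SCHGDD of type `(n, (h*w)^t)` and a `(k, h*g; h)`-CHDM, then there
exists a `k`-SCHGDD of type `(n, (h*g*w)^t)`. -/
theorem schgdd_inflate_by_chdm (k n w t h g : ℕ) (hk : 2 ≤ k) (hn : 0 < n) (hw : 0 < w)
    (ht : 0 < t) (hh : 0 < h) (hg : 0 < g) (hcop : Nat.gcd (w * t) (h * g) = 1)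
    (h1 : ExistsSCHGDD k n w t) (h2 : ExistsSCHGDD k n (h * w) t)
    (h3 : ExistsCHDM k h g) :
    ExistsSCHGDD k n (h * g * w) t := by
  classical
  obtain ⟨B1, hB1card, hB1gdd, hB1diff⟩ := h1
  obtain ⟨B2, hB2card, hB2gdd, hB2diff⟩ := h2
  obtain ⟨D, hD⟩ := h3
  haveI : NeZero (w * t) := ⟨by positivity⟩
  haveI : NeZero (h * g) := ⟨by positivity⟩
  haveI : NeZero h := ⟨by omega⟩
  haveI : NeZero ((h * g * w) * t) := ⟨by positivity⟩
  haveI : NeZero ((h * w) * t) := ⟨by positivity⟩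
  have hcop1 : Nat.Coprime (w * t) (h * g) := hcop
  have hcop2 : Nat.Coprime (w * t) h :=
    Nat.Coprime.coprime_dvd_right (Dvd.intro g rfl) hcop1
  -- the two CRT isomorphisms
  let e : ZMod ((h * g * w) * t) ≃+* ZMod (w * t) × ZMod (h * g) :=
    (ZMod.ringEquivCongr (by ring)).trans (ZMod.chineseRemainder hcop1)
  let e2 : ZMod ((h * w) * t) ≃+* ZMod (w * t) × ZMod h :=
    (ZMod.ringEquivCongr (by ring)).trans (ZMod.chineseRemainder hcop2)
  -- first components are castHoms
  have hdvd1 : (w * t) ∣ ((h * g * w) * t) := ⟨h * g, by ring⟩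
  have hdvd2 : (w * t) ∣ ((h * w) * t) := ⟨h, by ring⟩
  have htdvd : t ∣ w * t := dvd_mul_left t w
  have he1 : ∀ z, (e z).1 = ZMod.castHom hdvd1 (ZMod (w * t)) z := by
    intro z
    exact RingHom.congr_fun (RingHom.ext_zmod
      ((RingHom.fst (ZMod (w * t)) (ZMod (h * g))).comp
        ((e : ZMod ((h * g * w) * t) ≃+* _) : ZMod ((h * g * w) * t) →+* _))
      (ZMod.castHom hdvd1 (ZMod (w * t)))) z
  have he2 : ∀ z, (e2 z).1 = ZMod.castHom hdvd2 (ZMod (w * t)) z := by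
    intro z
    exact RingHom.congr_fun (RingHom.ext_zmod
      ((RingHom.fst (ZMod (w * t)) (ZMod h)).comp
        ((e2 : ZMod ((h * w) * t) ≃+* _) : ZMod ((h * w) * t) →+* _))
      (ZMod.castHom hdvd2 (ZMod (w * t)))) z
  -- membership in the hole subgroups
  have hmem1 : ∀ z : ZMod ((h * g * w) * t),
      z ∈ AddSubgroup.zmultiples ((t : ZMod ((h * g * w) * t))) ↔
        (e z).1 ∈ AddSubgroup.zmultiples ((t : ZMod (w * t))) := by
    intro z
    rw [he1]
    exact aux_mem_zmultiples_castHom_iff htdvd hdvd1 z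
  have hmem2 : ∀ z : ZMod ((h * w) * t),
      z ∈ AddSubgroup.zmultiples ((t : ZMod ((h * w) * t))) ↔
        (e2 z).1 ∈ AddSubgroup.zmultiples ((t : ZMod (w * t))) := by
    intro z
    rw [he2]
    exact aux_mem_zmultiples_castHom_iff htdvd hdvd2 z
  -- the additive embedding ZMod h →+ ZMod (h*g), 1 ↦ g
  have hg0 : ((h : ℤ) • ((g : ZMod (h * g))) = 0) := by
    rw [zsmul_eq_mul]
    push_cast
    rw [show ((h : ZMod (h*g)) * g = ((h * g : ℕ) : ZMod (h*g))) by push_cast; ring,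
      ZMod.natCast_self]
  let μ : ZMod h →+ ZMod (h * g) :=
    ZMod.lift h ⟨(zmultiplesHom (ZMod (h * g)) (g : ZMod (h * g))), hg0⟩
  have hμcoe : ∀ m : ℤ, μ ((m : ℤ) : ZMod h) = m • (g : ZMod (h * g)) := by
    intro m
    exact ZMod.lift_coe h _ m
  have hμinj : Function.Injective μ := by
    rw [ZMod.lift_injective]
    intro m hm
    simp only [zmultiplesHom_apply, zsmul_eq_mul] at hm
    have : ((m * g : ℤ) : ZMod (h * g)) = 0 := by push_cast; exact hm
    rw [ZMod.intCast_zmod_eq_zero_iff_dvd] at this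
    have hdvd' : (h : ℤ) ∣ m := by
      have hgpos : (0:ℤ) < g := by exact_mod_cast hg
      rcases this with ⟨c, hc⟩
      refine ⟨c, ?_⟩
      have : m * g = h * c * g := by push_cast at hc ⊢; linarith [hc]
      exact mul_right_cancel₀ (by omega) this
    rw [ZMod.intCast_zmod_eq_zero_iff_dvd]
    exact hdvd'
  have hμrange : ∀ b : ZMod (h * g),
      b ∈ AddSubgroup.zmultiples ((g : ZMod (h * g))) ↔ ∃ c, μ c = b := by
    intro b
    constructor
    · rintro ⟨m, rfl⟩
      exact ⟨(m : ZMod h), hμcoe m⟩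
    · rintro ⟨c, rfl⟩
      have : c = ((c.val : ℤ) : ZMod h) := by
        push_cast
        exact (ZMod.natCast_rightInverse c).symm
      rw [this, hμcoe]
      exact ⟨(c.val : ℤ), rfl⟩
  -- the embedding ZMod ((h*w)*t) → ZMod ((h*g*w)*t)
  let φ2 : ZMod ((h * w) * t) → ZMod ((h * g * w) * t) :=
    fun x => e.symm ((e2 x).1, μ (e2 x).2)
  have hφ2 : ∀ x, φ2 x = e.symm ((e2 x).1, μ (e2 x).2) := fun x => rfl
  have hφ2sub : ∀ x y, φ2 x - φ2 y = φ2 (x - y) := by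
    intro x y
    rw [hφ2, hφ2, hφ2, ← map_sub e.symm, Prod.mk_sub_mk, map_sub e2, Prod.fst_sub,
      Prod.snd_sub, map_sub μ]
  have hφ2inj : Function.Injective φ2 := by
    intro x y hxy
    rw [hφ2, hφ2] at hxy
    have h2 := e.symm.injective hxy
    rw [Prod.mk.injEq] at h2
    have h3 : e2 x = e2 y := Prod.ext h2.1 (hμinj h2.2)
    exact e2.injective h3
  -- the two families of blocks
  let F1 : Finset (Fin n × ZMod (w * t)) → Fin (h * (g - 1)) →
      Finset (Fin n × ZMod ((h * g * w) * t)) :=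
    fun b c => b.image (fun p => (p.1, e.symm (p.2, SCHD D (SCHrow b p) c)))
  have hF1 : ∀ b c, F1 b c =
      b.image (fun p => (p.1, e.symm (p.2, SCHD D (SCHrow b p) c))) := fun b c => rfl
  let F2 : Finset (Fin n × ZMod ((h * w) * t)) → Finset (Fin n × ZMod ((h * g * w) * t)) :=
    fun b => b.image (fun p => (p.1, φ2 p.2))
  have hF2 : ∀ b, F2 b = b.image (fun p => (p.1, φ2 p.2)) := fun b => rfl
  -- basic facts about rows
  have hrowlt : ∀ b ∈ B1, ∀ p ∈ b, SCHrow b p < k := by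
    intro b hb p hp
    rw [SCHrow, dif_pos hp]
    exact lt_of_lt_of_eq (Fin.is_lt _) (hB1card b hb)
  have hrowinj : ∀ (b : Finset (Fin n × ZMod (w * t))), ∀ p ∈ b, ∀ q ∈ b,
      SCHrow b p = SCHrow b q → p = q := by
    intro b p hp q hq hrow
    rw [SCHrow, dif_pos hp, SCHrow, dif_pos hq] at hrow
    have := b.equivFin.injective (Fin.val_injective hrow)
    exact congrArg Subtype.val this
  -- difference counts of matrix rows
  have hDcount : ∀ b ∈ B1, ∀ p ∈ b, ∀ q ∈ b, p ≠ q → ∀ v : ZMod (h * g),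
      (v ∈ AddSubgroup.zmultiples ((g : ZMod (h * g))) →
        (Finset.univ.filter (fun c => SCHD D (SCHrow b p) c - SCHD D (SCHrow b q) c = v)).card
          = 0) ∧
      (v ∉ AddSubgroup.zmultiples ((g : ZMod (h * g))) →
        (Finset.univ.filter (fun c => SCHD D (SCHrow b p) c - SCHD D (SCHrow b q) c = v)).card
          = 1) := by
    intro b hb p hp q hq hpq v
    have hltp := hrowlt b hb p hp
    have hltq := hrowlt b hb q hq
    have hrne : (⟨SCHrow b p, hltp⟩ : Fin k) ≠ ⟨SCHrow b q, hltq⟩ := by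
      intro hcon
      exact hpq (hrowinj b p hp q hq (by simpa using congrArg Fin.val hcon))
    have hset : (Finset.univ.filter
        (fun c => SCHD D (SCHrow b p) c - SCHD D (SCHrow b q) c = v)) =
        (Finset.univ.filter
        (fun c => D ⟨SCHrow b p, hltp⟩ c - D ⟨SCHrow b q, hltq⟩ c = v)) := by
      apply Finset.filter_congr
      intro c _
      rw [SCHD, dif_pos hltp, SCHD, dif_pos hltq]
    rw [hset]
    exact hD _ _ hrne v
  -- injectivity of the point maps
  have hpt1 : ∀ b ∈ B1, ∀ c, ∀ p ∈ b, ∀ q ∈ b,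
      ((p.1 : Fin n), e.symm (p.2, SCHD D (SCHrow b p) c)) =
        (q.1, e.symm (q.2, SCHD D (SCHrow b q) c)) → p = q := by
    intro b hb c p hp q hq hpq
    exact hB1gdd b hb p hp q hq (Prod.ext_iff.mp hpq).1
  have hpt2 : ∀ b ∈ B2, ∀ p ∈ b, ∀ q ∈ b,
      ((p.1 : Fin n), φ2 p.2) = (q.1, φ2 q.2) → p = q := by
    intro b hb p hp q hq hpq
    exact hB2gdd b hb p hp q hq (Prod.ext_iff.mp hpq).1
  -- cards of the new blocks
  have hcard1 : ∀ b ∈ B1, ∀ c, (F1 b c).card = k := by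
    intro b hb c
    rw [hF1, Finset.card_image_of_injOn (fun p hp q hq => hpt1 b hb c p hp q hq)]
    exact hB1card b hb
  have hcard2 : ∀ b ∈ B2, (F2 b).card = k := by
    intro b hb
    rw [hF2, Finset.card_image_of_injOn (fun p hp q hq => hpt2 b hb p hp q hq)]
    exact hB2card b hb
  -- recovering b from F1 b c
  have hrec1 : ∀ b c, (F1 b c).image (fun z => (z.1, (e z.2).1)) = b := by
    intro b c
    rw [hF1, Finset.image_image]
    have : ((fun z : Fin n × ZMod ((h*g*w)*t) => (z.1, (e z.2).1)) ∘
        (fun p : Fin n × ZMod (w*t) => (p.1, e.symm (p.2, SCHD D (SCHrow b p) c)))) =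
        id := by
      funext p
      simp only [Function.comp_apply, RingEquiv.apply_symm_apply, id]
    rw [this, Finset.image_id]
  -- the new family
  let Bnew : Finset (Finset (Fin n × ZMod ((h * g * w) * t))) :=
    ((B1 ×ˢ (Finset.univ : Finset (Fin (h * (g - 1))))).image (fun bc => F1 bc.1 bc.2)) ∪
      B2.image F2
  have hBnew : Bnew =
    ((B1 ×ˢ (Finset.univ : Finset (Fin (h * (g - 1))))).image (fun bc => F1 bc.1 bc.2)) ∪
      B2.image F2 := rfl
  -- membership characterization
  have hmemBnew : ∀ S ∈ Bnew, (∃ bc : Finset (Fin n × ZMod (w*t)) × Fin (h*(g-1)),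
      bc.1 ∈ B1 ∧ S = F1 bc.1 bc.2) ∨ (∃ b ∈ B2, S = F2 b) := by
    intro S hS
    rw [hBnew, Finset.mem_union] at hS
    rcases hS with hS | hS
    · rw [Finset.mem_image] at hS
      obtain ⟨bc, hbc, hEq⟩ := hS
      rw [Finset.mem_product] at hbc
      exact Or.inl ⟨bc, hbc.1, hEq.symm⟩
    · rw [Finset.mem_image] at hS
      obtain ⟨b, hb, hEq⟩ := hS
      exact Or.inr ⟨b, hb, hEq.symm⟩
  -- injectivity of (b,c) ↦ F1 b c, and of F2, plus disjointness
  have hcole : ∀ b ∈ B1, ∀ c c' : Fin (h * (g - 1)), F1 b c = F1 b c' → c = c' := by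
    intro b hb c c' hEq
    obtain ⟨p, hp, q, hq, hpq⟩ := Finset.one_lt_card.mp
      (by rw [hB1card b hb]; exact lt_of_lt_of_le one_lt_two hk)
    have hsame : ∀ r ∈ b, SCHD D (SCHrow b r) c = SCHD D (SCHrow b r) c' := by
      intro r hr
      have hmem : (r.1, e.symm (r.2, SCHD D (SCHrow b r) c)) ∈ F1 b c' := by
        rw [← hEq, hF1]
        exact Finset.mem_image_of_mem _ hr
      rw [hF1, Finset.mem_image] at hmem
      obtain ⟨s, hs, hsEq⟩ := hmem
      have h2 : s = r := hB1gdd b hb s hs r hr (Prod.ext_iff.mp hsEq).1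
      subst h2
      have h3 := e.symm.injective (Prod.ext_iff.mp hsEq).2
      exact ((Prod.ext_iff.mp h3).2).symm
    set v := SCHD D (SCHrow b p) c - SCHD D (SCHrow b q) c with hv
    have hc1 : c ∈ Finset.univ.filter
        (fun c0 => SCHD D (SCHrow b p) c0 - SCHD D (SCHrow b q) c0 = v) := by
      simp [hv]
    have hc2 : c' ∈ Finset.univ.filter
        (fun c0 => SCHD D (SCHrow b p) c0 - SCHD D (SCHrow b q) c0 = v) := by
      rw [Finset.mem_filter]
      exact ⟨Finset.mem_univ _, by rw [← hsame p hp, ← hsame q hq]⟩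
    by_cases hvmem : v ∈ AddSubgroup.zmultiples ((g : ZMod (h * g)))
    · have h0 := (hDcount b hb p hp q hq hpq v).1 hvmem
      rw [Finset.card_eq_zero] at h0
      rw [h0] at hc1
      exact absurd hc1 (Finset.notMem_empty c)
    · have h1 := (hDcount b hb p hp q hq hpq v).2 hvmem
      obtain ⟨x, hx⟩ := Finset.card_eq_one.mp h1
      rw [hx, Finset.mem_singleton] at hc1 hc2
      rw [hc1, hc2]
  have hinj1 : ∀ bc ∈ B1 ×ˢ (Finset.univ : Finset (Fin (h * (g - 1)))),
      ∀ bc' ∈ B1 ×ˢ (Finset.univ : Finset (Fin (h * (g - 1)))),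
      F1 bc.1 bc.2 = F1 bc'.1 bc'.2 → bc = bc' := by
    intro bc hbc bc' hbc' hEq
    rw [Finset.mem_product] at hbc hbc'
    have hbeq : bc.1 = bc'.1 := by
      rw [← hrec1 bc.1 bc.2, ← hrec1 bc'.1 bc'.2, hEq]
    have hceq := hcole bc.1 hbc.1 bc.2 bc'.2 (by rw [hEq, hbeq])
    exact Prod.ext hbeq hceq
  have hinj2 : ∀ b ∈ B2, ∀ b' ∈ B2, F2 b = F2 b' → b = b' := by
    intro b _ b' _ hEq
    have hptinj : Function.Injective (fun p : Fin n × ZMod ((h * w) * t) => (p.1, φ2 p.2)) := by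
      intro p q hpq
      rw [Prod.mk.injEq] at hpq
      exact Prod.ext hpq.1 (hφ2inj hpq.2)
    exact Finset.image_injective hptinj hEq
  have hdisj : Disjoint
      ((B1 ×ˢ (Finset.univ : Finset (Fin (h * (g - 1))))).image (fun bc => F1 bc.1 bc.2))
      (B2.image F2) := by
    rw [Finset.disjoint_left]
    intro S hS1 hS2
    rw [Finset.mem_image] at hS1 hS2
    obtain ⟨bc, hbc, hSe1⟩ := hS1
    obtain ⟨b2, hb2, hSe2⟩ := hS2
    rw [Finset.mem_product] at hbc
    obtain ⟨p, hp, q, hq, hpq⟩ := Finset.one_lt_card.mp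
      (by rw [hB1card bc.1 hbc.1]; exact lt_of_lt_of_le one_lt_two hk)
    have hrange : ∀ r ∈ bc.1, ∃ cr, μ cr = SCHD D (SCHrow bc.1 r) bc.2 := by
      intro r hr
      have hmem : (r.1, e.symm (r.2, SCHD D (SCHrow bc.1 r) bc.2)) ∈ F2 b2 := by
        rw [hSe2, ← hSe1, hF1]
        exact Finset.mem_image_of_mem _ hr
      rw [hF2, Finset.mem_image] at hmem
      obtain ⟨y, _, hyEq⟩ := hmem
      have h2 := (Prod.ext_iff.mp hyEq).2
      rw [hφ2] at h2
      have h3 := e.symm.injective h2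
      exact ⟨(e2 y.2).2, (Prod.ext_iff.mp h3).2⟩
    obtain ⟨cp, hcp⟩ := hrange p hp
    obtain ⟨cq, hcq⟩ := hrange q hq
    have hvmem : SCHD D (SCHrow bc.1 p) bc.2 - SCHD D (SCHrow bc.1 q) bc.2 ∈
        AddSubgroup.zmultiples ((g : ZMod (h * g))) := by
      refine (hμrange _).mpr ⟨cp - cq, ?_⟩
      rw [map_sub, hcp, hcq]
    have h0 := (hDcount bc.1 hbc.1 p hp q hq hpq _).1 hvmem
    rw [Finset.card_eq_zero] at h0
    have : bc.2 ∈ Finset.univ.filter (fun c0 => SCHD D (SCHrow bc.1 p) c0 -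
        SCHD D (SCHrow bc.1 q) c0 = SCHD D (SCHrow bc.1 p) bc.2 -
          SCHD D (SCHrow bc.1 q) bc.2) := by simp
    rw [h0] at this
    exact absurd this (Finset.notMem_empty _)
  refine ⟨Bnew, ?_, ?_, ?_⟩
  · -- cards
    intro S hS
    rcases hmemBnew S hS with ⟨bc, hbc, rfl⟩ | ⟨b, hb, rfl⟩
    · exact hcard1 bc.1 hbc bc.2
    · exact hcard2 b hb
  · -- gdd property
    intro S hS p hp q hq hfst
    rcases hmemBnew S hS with ⟨bc, hbc, rfl⟩ | ⟨b, hb, rfl⟩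
    · rw [hF1, Finset.mem_image] at hp hq
      obtain ⟨p0, hp0, rfl⟩ := hp
      obtain ⟨q0, hq0, rfl⟩ := hq
      have : p0 = q0 := hB1gdd bc.1 hbc p0 hp0 q0 hq0 hfst
      rw [this]
    · rw [hF2, Finset.mem_image] at hp hq
      obtain ⟨p0, hp0, rfl⟩ := hp
      obtain ⟨q0, hq0, rfl⟩ := hq
      have : p0 = q0 := hB2gdd b hb p0 hp0 q0 hq0 hfst
      rw [this]
  · -- the difference property
    intro i j hij
    have key : ∀ z : ZMod ((h * g * w) * t),
        (∑ S ∈ Bnew, ((S ×ˢ S).filter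
          (fun pq => pq.1.1 = i ∧ pq.2.1 = j ∧ pq.1.2 - pq.2.2 = z)).card) =
        if (e z).1 ∈ AddSubgroup.zmultiples ((t : ZMod (w * t))) then 0 else 1 := by
      intro z
      have hsplit : (∑ S ∈ Bnew, ((S ×ˢ S).filter
            (fun pq => pq.1.1 = i ∧ pq.2.1 = j ∧ pq.1.2 - pq.2.2 = z)).card) =
          (∑ bc ∈ B1 ×ˢ (Finset.univ : Finset (Fin (h * (g - 1)))),
            ((F1 bc.1 bc.2 ×ˢ F1 bc.1 bc.2).filter
              (fun pq => pq.1.1 = i ∧ pq.2.1 = j ∧ pq.1.2 - pq.2.2 = z)).card) +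
          (∑ b ∈ B2, ((F2 b ×ˢ F2 b).filter
              (fun pq => pq.1.1 = i ∧ pq.2.1 = j ∧ pq.1.2 - pq.2.2 = z)).card) := by
        rw [hBnew, Finset.sum_union hdisj, Finset.sum_image hinj1, Finset.sum_image hinj2]
      have stepB : ∀ b ∈ B1, ∀ c : Fin (h * (g - 1)),
          ((F1 b c ×ˢ F1 b c).filter
            (fun pq => pq.1.1 = i ∧ pq.2.1 = j ∧ pq.1.2 - pq.2.2 = z)).card =
          ((b ×ˢ b).filter (fun pq => (pq.1.1 = i ∧ pq.2.1 = j ∧ pq.1.2 - pq.2.2 = (e z).1) ∧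
            SCHD D (SCHrow b pq.1) c - SCHD D (SCHrow b pq.2) c = (e z).2)).card := by
        intro b hb c
        refine (Finset.card_bij (fun pq _ =>
          ((pq.1.1, e.symm (pq.1.2, SCHD D (SCHrow b pq.1) c)),
           (pq.2.1, e.symm (pq.2.2, SCHD D (SCHrow b pq.2) c)))) ?_ ?_ ?_).symm
        · rintro ⟨p, q⟩ hpq0
          rw [Finset.mem_filter, Finset.mem_product] at hpq0
          obtain ⟨⟨hp, hq⟩, ⟨hpi, hqj, hdiff⟩, hDdiff⟩ := hpq0
          rw [Finset.mem_filter, Finset.mem_product]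
          refine ⟨⟨?_, ?_⟩, hpi, hqj, ?_⟩
          · rw [hF1]; exact Finset.mem_image_of_mem _ hp
          · rw [hF1]; exact Finset.mem_image_of_mem _ hq
          · show e.symm (p.2, SCHD D (SCHrow b p) c) -
              e.symm (q.2, SCHD D (SCHrow b q) c) = z
            rw [← map_sub e.symm, Prod.mk_sub_mk, hdiff, hDdiff, Prod.mk.eta,
              RingEquiv.symm_apply_apply]
        · rintro ⟨p, q⟩ hpq0 ⟨p', q'⟩ hpq0' hEq
          rw [Finset.mem_filter, Finset.mem_product] at hpq0 hpq0'
          rw [Prod.mk.injEq] at hEq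
          exact Prod.ext (hpt1 b hb c p hpq0.1.1 p' hpq0'.1.1 hEq.1)
            (hpt1 b hb c q hpq0.1.2 q' hpq0'.1.2 hEq.2)
        · rintro ⟨P, Q⟩ hPQ
          rw [Finset.mem_filter, Finset.mem_product] at hPQ
          obtain ⟨⟨hP, hQ⟩, hPi, hQj, hdiff⟩ := hPQ
          rw [hF1, Finset.mem_image] at hP hQ
          obtain ⟨p, hp, hpP⟩ := hP
          obtain ⟨q, hq, hqQ⟩ := hQ
          have hdiff2 : e.symm (p.2 - q.2, SCHD D (SCHrow b p) c - SCHD D (SCHrow b q) c)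
              = z := by
            rw [← Prod.mk_sub_mk, map_sub]
            show (p.1, e.symm (p.2, SCHD D (SCHrow b p) c)).2 -
              (q.1, e.symm (q.2, SCHD D (SCHrow b q) c)).2 = z
            rw [hpP, hqQ]
            exact hdiff
          have hcomp : (p.2 - q.2, SCHD D (SCHrow b p) c - SCHD D (SCHrow b q) c) = e z := by
            apply e.symm.injective
            rw [hdiff2, RingEquiv.symm_apply_apply]
          refine ⟨(p, q), ?_, Prod.ext hpP hqQ⟩
          rw [Finset.mem_filter, Finset.mem_product]
          refine ⟨⟨hp, hq⟩, ⟨?_, ?_, (Prod.ext_iff.mp hcomp).1⟩, (Prod.ext_iff.mp hcomp).2⟩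
          · rw [show p.1 = (p.1, e.symm (p.2, SCHD D (SCHrow b p) c)).1 from rfl, hpP]
            exact hPi
          · rw [show q.1 = (q.1, e.symm (q.2, SCHD D (SCHrow b q) c)).1 from rfl, hqQ]
            exact hQj
      have stepC : ∀ b ∈ B1,
          (∑ c : Fin (h * (g - 1)),
            ((b ×ˢ b).filter (fun pq => (pq.1.1 = i ∧ pq.2.1 = j ∧ pq.1.2 - pq.2.2 = (e z).1) ∧
              SCHD D (SCHrow b pq.1) c - SCHD D (SCHrow b pq.2) c = (e z).2)).card) =
          ((b ×ˢ b).filter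
            (fun pq => pq.1.1 = i ∧ pq.2.1 = j ∧ pq.1.2 - pq.2.2 = (e z).1)).card *
          (if (e z).2 ∈ AddSubgroup.zmultiples ((g : ZMod (h * g))) then 0 else 1) := by
        intro b hb
        have h1 : ∀ c : Fin (h * (g - 1)),
            ((b ×ˢ b).filter (fun pq => (pq.1.1 = i ∧ pq.2.1 = j ∧ pq.1.2 - pq.2.2 = (e z).1) ∧
              SCHD D (SCHrow b pq.1) c - SCHD D (SCHrow b pq.2) c = (e z).2)).card =
            ∑ pq ∈ (b ×ˢ b).filter
              (fun pq => pq.1.1 = i ∧ pq.2.1 = j ∧ pq.1.2 - pq.2.2 = (e z).1),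
              (if SCHD D (SCHrow b pq.1) c - SCHD D (SCHrow b pq.2) c = (e z).2
                then 1 else 0) := by
          intro c
          rw [← Finset.filter_filter, Finset.card_filter]
        rw [Finset.sum_congr rfl (fun c _ => h1 c), Finset.sum_comm]
        have h2 : ∀ pq ∈ (b ×ˢ b).filter
            (fun pq => pq.1.1 = i ∧ pq.2.1 = j ∧ pq.1.2 - pq.2.2 = (e z).1),
            (∑ c : Fin (h * (g - 1)),
              if SCHD D (SCHrow b pq.1) c - SCHD D (SCHrow b pq.2) c = (e z).2
                then 1 else 0) =
            (if (e z).2 ∈ AddSubgroup.zmultiples ((g : ZMod (h * g))) then 0 else 1) := by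
          intro pq hpq0
          rw [Finset.mem_filter, Finset.mem_product] at hpq0
          obtain ⟨⟨hp, hq⟩, hpi, hqj, _⟩ := hpq0
          have hne : pq.1 ≠ pq.2 := by
            intro hcc
            exact hij (by rw [← hpi, ← hqj, hcc])
          rw [← Finset.card_filter]
          by_cases hbb : (e z).2 ∈ AddSubgroup.zmultiples ((g : ZMod (h * g)))
          · rw [if_pos hbb]
            exact (hDcount b hb pq.1 hp pq.2 hq hne _).1 hbb
          · rw [if_neg hbb]
            exact (hDcount b hb pq.1 hp pq.2 hq hne _).2 hbb
        rw [Finset.sum_congr rfl h2, Finset.sum_const, smul_eq_mul]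
      have hfam1 : (∑ bc ∈ B1 ×ˢ (Finset.univ : Finset (Fin (h * (g - 1)))),
            ((F1 bc.1 bc.2 ×ˢ F1 bc.1 bc.2).filter
              (fun pq => pq.1.1 = i ∧ pq.2.1 = j ∧ pq.1.2 - pq.2.2 = z)).card) =
          (if (e z).1 ∈ AddSubgroup.zmultiples ((t : ZMod (w * t))) then 0 else 1) *
          (if (e z).2 ∈ AddSubgroup.zmultiples ((g : ZMod (h * g))) then 0 else 1) := by
        rw [Finset.sum_product]
        rw [Finset.sum_congr rfl (fun b hb => by
          rw [Finset.sum_congr rfl (fun c _ => stepB b hb c), stepC b hb])]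
        rw [← Finset.sum_mul]
        by_cases ha : (e z).1 ∈ AddSubgroup.zmultiples ((t : ZMod (w * t)))
        · rw [(hB1diff i j hij (e z).1).1 ha, if_pos ha]
        · rw [(hB1diff i j hij (e z).1).2 ha, if_neg ha, one_mul]
      have stepD : ∀ b ∈ B2,
          ((F2 b ×ˢ F2 b).filter
            (fun pq => pq.1.1 = i ∧ pq.2.1 = j ∧ pq.1.2 - pq.2.2 = z)).card =
          ((b ×ˢ b).filter
            (fun pq => pq.1.1 = i ∧ pq.2.1 = j ∧ φ2 pq.1.2 - φ2 pq.2.2 = z)).card := by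
        intro b hb
        refine (Finset.card_bij (fun pq _ =>
          ((pq.1.1, φ2 pq.1.2), (pq.2.1, φ2 pq.2.2))) ?_ ?_ ?_).symm
        · rintro ⟨p, q⟩ hpq0
          rw [Finset.mem_filter, Finset.mem_product] at hpq0
          obtain ⟨⟨hp, hq⟩, hpi, hqj, hdiff⟩ := hpq0
          rw [Finset.mem_filter, Finset.mem_product]
          refine ⟨⟨?_, ?_⟩, hpi, hqj, hdiff⟩
          · rw [hF2]; exact Finset.mem_image_of_mem _ hp
          · rw [hF2]; exact Finset.mem_image_of_mem _ hq
        · rintro ⟨p, q⟩ hpq0 ⟨p', q'⟩ hpq0' hEq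
          rw [Finset.mem_filter, Finset.mem_product] at hpq0 hpq0'
          rw [Prod.mk.injEq] at hEq
          exact Prod.ext (hpt2 b hb p hpq0.1.1 p' hpq0'.1.1 hEq.1)
            (hpt2 b hb q hpq0.1.2 q' hpq0'.1.2 hEq.2)
        · rintro ⟨P, Q⟩ hPQ
          rw [Finset.mem_filter, Finset.mem_product] at hPQ
          obtain ⟨⟨hP, hQ⟩, hPi, hQj, hdiff⟩ := hPQ
          rw [hF2, Finset.mem_image] at hP hQ
          obtain ⟨p, hp, hpP⟩ := hP
          obtain ⟨q, hq, hqQ⟩ := hQ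
          refine ⟨(p, q), ?_, Prod.ext hpP hqQ⟩
          rw [Finset.mem_filter, Finset.mem_product]
          refine ⟨⟨hp, hq⟩, ?_, ?_, ?_⟩
          · rw [show p.1 = (p.1, φ2 p.2).1 from rfl, hpP]; exact hPi
          · rw [show q.1 = (q.1, φ2 q.2).1 from rfl, hqQ]; exact hQj
          · show (p.1, φ2 p.2).2 - (q.1, φ2 q.2).2 = z
            rw [hpP, hqQ]; exact hdiff
      have hfam2 : (∑ b ∈ B2, ((F2 b ×ˢ F2 b).filter
            (fun pq => pq.1.1 = i ∧ pq.2.1 = j ∧ pq.1.2 - pq.2.2 = z)).card) =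
          if (e z).2 ∈ AddSubgroup.zmultiples ((g : ZMod (h * g)))
            then (if (e z).1 ∈ AddSubgroup.zmultiples ((t : ZMod (w * t))) then 0 else 1)
            else 0 := by
        rw [Finset.sum_congr rfl stepD]
        by_cases hbb : (e z).2 ∈ AddSubgroup.zmultiples ((g : ZMod (h * g)))
        · obtain ⟨c0, hc0⟩ := (hμrange _).mp hbb
          set d : ZMod ((h * w) * t) := e2.symm ((e z).1, c0) with hd
          have hzimg : ∀ u : ZMod ((h * w) * t), (φ2 u = z ↔ u = d) := by
            intro u
            constructor
            · intro hu
              have hEq : e z = ((e2 u).1, μ (e2 u).2) := by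
                rw [← hu, hφ2, RingEquiv.apply_symm_apply]
              have h1 : (e2 u).1 = (e z).1 := by rw [hEq]
              have h2 : μ (e2 u).2 = μ c0 := by rw [hc0, hEq]
              have h3 : (e2 u).2 = c0 := hμinj h2
              rw [hd, ← h1, ← h3, Prod.mk.eta, RingEquiv.symm_apply_apply]
            · rintro rfl
              rw [hφ2, hd, RingEquiv.apply_symm_apply]
              show e.symm ((e z).1, μ c0) = z
              rw [hc0, Prod.mk.eta, RingEquiv.symm_apply_apply]
          have hfe : ∀ b : Finset (Fin n × ZMod ((h * w) * t)),
              (b ×ˢ b).filter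
                (fun pq => pq.1.1 = i ∧ pq.2.1 = j ∧ φ2 pq.1.2 - φ2 pq.2.2 = z) =
              (b ×ˢ b).filter
                (fun pq => pq.1.1 = i ∧ pq.2.1 = j ∧ pq.1.2 - pq.2.2 = d) := by
            intro b
            apply Finset.filter_congr
            intro pq _
            rw [hφ2sub, hzimg]
          rw [Finset.sum_congr rfl (fun b _ => by rw [hfe b]), if_pos hbb]
          have hdt : d ∈ AddSubgroup.zmultiples ((t : ZMod ((h * w) * t))) ↔
              (e z).1 ∈ AddSubgroup.zmultiples ((t : ZMod (w * t))) := by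
            rw [hmem2 d]
            rw [hd, RingEquiv.apply_symm_apply]
          by_cases ha : (e z).1 ∈ AddSubgroup.zmultiples ((t : ZMod (w * t)))
          · rw [if_pos ha]
            exact (hB2diff i j hij d).1 (hdt.mpr ha)
          · rw [if_neg ha]
            exact (hB2diff i j hij d).2 (fun hcon => ha (hdt.mp hcon))
        · rw [if_neg hbb]
          apply Finset.sum_eq_zero
          intro b _
          rw [Finset.card_eq_zero, Finset.filter_eq_empty_iff]
          rintro pq _ ⟨_, _, hcc⟩
          rw [hφ2sub] at hcc
          apply hbb
          have hEq : e z = ((e2 (pq.1.2 - pq.2.2)).1, μ (e2 (pq.1.2 - pq.2.2)).2) := by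
            rw [← hcc, hφ2, RingEquiv.apply_symm_apply]
          refine (hμrange _).mpr ⟨(e2 (pq.1.2 - pq.2.2)).2, ?_⟩
          rw [hEq]
      rw [hsplit, hfam1, hfam2]
      by_cases ha : (e z).1 ∈ AddSubgroup.zmultiples ((t : ZMod (w * t))) <;>
        by_cases hbb : (e z).2 ∈ AddSubgroup.zmultiples ((g : ZMod (h * g))) <;>
        simp [ha, hbb]
    intro z
    constructor
    · intro hz
      rw [key z, if_pos ((hmem1 z).mp hz)]
    · intro hz
      rw [key z, if_neg (fun hc => hz ((hmem1 z).mpr hc))]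
end

section
/- For every even positive integer m, there is no (3, 3m; m)-CHDM (that is, no cyclic holey difference matrix with k = 3, w = m and t = 3). -/
open Finset


/-- If a function's fibers have cardinality given by the indicator of `T`, then summing
any function over the domain equals summing it over `T`. -/
private lemma chdm_fiber_sum {n N : ℕ} [NeZero n] (h : Fin N → ZMod n)
    (T : Finset (ZMod n))
    (hc : ∀ z : ZMod n, (univ.filter (fun j => h j = z)).card = if z ∈ T then 1 else 0)
    (F : ZMod n → ZMod n) :
    ∑ z ∈ T, F z = ∑ j, F (h j) := by
  rw [← Finset.sum_fiberwise' Finset.univ h F]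
  have key : ∀ z : ZMod n,
      ∑ _j ∈ univ.filter (fun j => h j = z), F z = if z ∈ T then F z else 0 := by
    intro z
    rw [Finset.sum_const, hc z]
    split <;> simp
  rw [Finset.sum_congr rfl (fun z _ => key z), Finset.sum_ite_mem, Finset.univ_inter]


/-- Lemma 5.6: for every even positive integer `m` there is no `(3, 3m; m)`-CHDM. -/
theorem no_chdm_3_3m (m : ℕ) (hm : 0 < m) (hmeven : Even m) :
    ¬ ExistsCHDM 3 m 3 := by
  rintro ⟨D, hD⟩
  haveI : NeZero (m * 3) := ⟨by omega⟩
  -- the projection mod 3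
  set π : ZMod (m * 3) →+* ZMod 3 := ZMod.castHom (show (3:ℕ) ∣ m * 3 from ⟨m, by ring⟩) (ZMod 3) with hπ
  have hπcast : ∀ v : ℕ, π (v : ZMod (m * 3)) = (v : ZMod 3) := fun v => map_natCast π v
  have hπval : ∀ z : ZMod (m * 3), π z = ((z.val : ℕ) : ZMod 3) := by
    intro z
    conv_lhs => rw [← ZMod.natCast_zmod_val z]
    exact hπcast z.val
  -- the hole is the kernel of π
  have hhole : ∀ z : ZMod (m * 3),
      z ∈ AddSubgroup.zmultiples (((3 : ℕ) : ZMod (m * 3))) ↔ π z = 0 := by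
    intro z
    rw [AddSubgroup.mem_zmultiples_iff]
    constructor
    · rintro ⟨k, rfl⟩
      rw [map_zsmul, hπcast 3, ZMod.natCast_self, smul_zero]
    · intro hz
      rw [hπval z] at hz
      have h3 : (3 : ℕ) ∣ z.val := by
        rwa [ZMod.natCast_eq_zero_iff] at hz
      obtain ⟨c, hc⟩ := h3
      refine ⟨(c : ℤ), ?_⟩
      have : ((3 * c : ℕ) : ZMod (m * 3)) = z := by rw [← hc, ZMod.natCast_zmod_val]
      rw [← this, zsmul_eq_mul]
      push_cast
      ring
  -- counting hypothesis, reformulated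
  set T : Finset (ZMod (m * 3)) := univ.filter (fun z => π z ≠ 0) with hT
  have hmemT : ∀ z : ZMod (m * 3), z ∈ T ↔ π z ≠ 0 := by
    intro z; rw [hT, Finset.mem_filter]; simp
  have hcount : ∀ x y : Fin 3, x ≠ y → ∀ z : ZMod (m * 3),
      (univ.filter (fun j => D x j - D y j = z)).card = if z ∈ T then 1 else 0 := by
    intro x y hxy z
    obtain ⟨h0, h1⟩ := hD x y hxy z
    by_cases hz : z ∈ T
    · rw [if_pos hz]
      exact h1 (fun hmem => (hmemT z).mp hz ((hhole z).mp hmem))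
    · rw [if_neg hz]
      apply h0
      rw [hhole z]
      by_contra hne
      exact hz ((hmemT z).mpr hne)
  -- differences never land in the hole
  have hne : ∀ x y : Fin 3, x ≠ y → ∀ j, π (D x j - D y j) ≠ 0 := by
    intro x y hxy j hzero
    have hc := hcount x y hxy (D x j - D y j)
    rw [if_neg (fun hmem => ((hmemT _).mp hmem) hzero)] at hc
    have : j ∈ univ.filter (fun j' => D x j' - D y j' = D x j - D y j) := by
      simp
    rw [Finset.card_eq_zero] at hc
    rw [hc] at this
    exact absurd this (Finset.notMem_empty j)
  -- key sum identity
  have key : ∀ x y : Fin 3, x ≠ y → ∀ a : ZMod 3, a ≠ 0 →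
      ∑ z ∈ univ.filter (fun z => π z = a), z
        = ∑ j, if π (D x j - D y j) = a then D x j - D y j else 0 := by
    intro x y hxy a ha
    have h1 := chdm_fiber_sum (fun j => D x j - D y j) T (hcount x y hxy)
      (fun z => if π z = a then z else 0)
    rw [← Finset.sum_filter] at h1
    rw [← h1, hT, Finset.filter_filter]
    congr 1
    ext w
    simp only [Finset.mem_filter, Finset.mem_univ, true_and]
    exact ⟨fun hw => ⟨fun h0 => ha (hw ▸ h0), hw⟩, fun hw => hw.2⟩
  -- the three difference functions
  have hg : ∀ j, D 0 j - D 2 j = (D 0 j - D 1 j) + (D 1 j - D 2 j) := by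
    intro j; ring
  -- columnwise identity
  have hcol : ∀ j : Fin (m * (3 - 1)),
      (if π (D 0 j - D 2 j) = 2 then D 0 j - D 2 j else 0)
        = (if π (D 0 j - D 1 j) = 1 then D 0 j - D 1 j else 0)
          + (if π (D 1 j - D 2 j) = 1 then D 1 j - D 2 j else 0) := by
    intro j
    have ha := hne 0 1 (by decide) j
    have hb := hne 1 2 (by decide) j
    have hab : π (D 0 j - D 2 j) = π (D 0 j - D 1 j) + π (D 1 j - D 2 j) := by
      rw [hg j, map_add]
    have habne : π (D 0 j - D 1 j) + π (D 1 j - D 2 j) ≠ 0 := by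
      rw [← hab]; exact hne 0 2 (by decide) j
    have hcases : (π (D 0 j - D 1 j) = 1 ∧ π (D 1 j - D 2 j) = 1)
        ∨ (π (D 0 j - D 1 j) = 2 ∧ π (D 1 j - D 2 j) = 2) := by
      revert ha hb habne
      generalize π (D 0 j - D 1 j) = a
      generalize π (D 1 j - D 2 j) = b
      revert a b; decide
    rcases hcases with ⟨h1, h2⟩ | ⟨h1, h2⟩
    · rw [hab, h1, h2, if_pos (by decide), if_pos rfl, if_pos rfl, hg j]
    · rw [hab, h1, h2, if_neg (by decide), if_neg (by decide), if_neg (by decide), add_zero]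
  -- derive S2 = S1 + S1
  have hS : (∑ z ∈ univ.filter (fun z => π z = 2), z)
      = (∑ z ∈ univ.filter (fun z => π z = 1), z)
        + (∑ z ∈ univ.filter (fun z => π z = 1), z) := by
    have step : (∑ j : Fin (m * (3 - 1)), if π (D 0 j - D 2 j) = 2 then D 0 j - D 2 j else 0)
        = (∑ j : Fin (m * (3 - 1)), if π (D 0 j - D 1 j) = 1 then D 0 j - D 1 j else 0)
          + (∑ j : Fin (m * (3 - 1)), if π (D 1 j - D 2 j) = 1 then D 1 j - D 2 j else 0) := by
      rw [← Finset.sum_add_distrib]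
      exact Finset.sum_congr rfl (fun j _ => hcol j)
    rw [key 0 2 (by decide) 2 (by decide), step, ← key 0 1 (by decide) 1 (by decide),
      ← key 1 2 (by decide) 1 (by decide)]
  -- compute the fibers explicitly
  have hfib : ∀ c : ℕ, 0 < c → c < 3 →
      univ.filter (fun z : ZMod (m * 3) => π z = (c : ZMod 3))
        = (Finset.range m).image (fun k => ((3 * k + c : ℕ) : ZMod (m * 3))) := by
    intro c hc0 hc3
    ext z
    simp only [Finset.mem_filter, Finset.mem_univ, true_and, Finset.mem_image,
      Finset.mem_range]
    constructor
    · intro hz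
      have hv : z.val % 3 = c := by
        rw [hπval z, ZMod.natCast_eq_natCast_iff] at hz
        have := hz
        unfold Nat.ModEq at this
        omega
      refine ⟨z.val / 3, ?_, ?_⟩
      · have := ZMod.val_lt z; omega
      · have : 3 * (z.val / 3) + c = z.val := by omega
        rw [this, ZMod.natCast_zmod_val]
    · rintro ⟨k, hk, rfl⟩
      rw [hπcast, ZMod.natCast_eq_natCast_iff]
      unfold Nat.ModEq
      omega
  -- injectivity of the parametrization
  have hinj : ∀ c : ℕ, c < 3 → ∀ k1 ∈ Finset.range m, ∀ k2 ∈ Finset.range m,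
      ((3 * k1 + c : ℕ) : ZMod (m * 3)) = ((3 * k2 + c : ℕ) : ZMod (m * 3)) → k1 = k2 := by
    intro c hc3 k1 hk1 k2 hk2 heq
    rw [Finset.mem_range] at hk1 hk2
    rw [ZMod.natCast_eq_natCast_iff] at heq
    unfold Nat.ModEq at heq
    rw [Nat.mod_eq_of_lt (by omega), Nat.mod_eq_of_lt (by omega)] at heq
    omega
  have hsum : ∀ c : ℕ, 0 < c → c < 3 →
      (∑ z ∈ univ.filter (fun z : ZMod (m * 3) => π z = (c : ZMod 3)), z)
        = ((∑ k ∈ Finset.range m, (3 * k + c) : ℕ) : ZMod (m * 3)) := by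
    intro c hc0 hc3
    rw [hfib c hc0 hc3, Finset.sum_image (hinj c hc3), Nat.cast_sum]
  -- put together
  set s : ℕ := ∑ k ∈ Finset.range m, k with hs
  have hnat : ∀ c : ℕ, (∑ k ∈ Finset.range m, (3 * k + c) : ℕ) = 3 * s + m * c := by
    intro c
    rw [Finset.sum_add_distrib, Finset.sum_const, Finset.card_range, ← Finset.mul_sum,
      smul_eq_mul, hs]
  have h1 : ((1 : ℕ) : ZMod 3) = (1 : ZMod 3) := by norm_num
  have h2 : ((2 : ℕ) : ZMod 3) = (2 : ZMod 3) := by norm_num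
  rw [← h1, ← h2] at hS
  rw [hsum 1 (by norm_num) (by norm_num), hsum 2 (by norm_num) (by norm_num),
    hnat 1, hnat 2, ← Nat.cast_add, ZMod.natCast_eq_natCast_iff] at hS
  -- extract divisibility
  have hdvd : ((m * 3 : ℕ) : ℤ) ∣ ((3 * s + m * 1 + (3 * s + m * 1) : ℕ) : ℤ)
      - ((3 * s + m * 2 : ℕ) : ℤ) := hS.dvd
  have hdvd' : (m : ℤ) ∣ (s : ℤ) := by
    have : ((3 * s + m * 1 + (3 * s + m * 1) : ℕ) : ℤ) - ((3 * s + m * 2 : ℕ) : ℤ)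
        = 3 * (s : ℤ) := by push_cast; ring
    rw [this] at hdvd
    have h3 : ((m * 3 : ℕ) : ℤ) = 3 * (m : ℤ) := by push_cast; ring
    rw [h3] at hdvd
    exact (mul_dvd_mul_iff_left (by norm_num : (3 : ℤ) ≠ 0)).mp hdvd
  have hmdvd : m ∣ s := Int.natCast_dvd_natCast.mp hdvd'
  obtain ⟨u, hu⟩ := hmdvd
  have hgauss : s * 2 = m * (m - 1) := Finset.sum_range_id_mul_two m
  obtain ⟨v, hv⟩ := hmeven
  rw [hu] at hgauss
  have : m * (u * 2) = m * (m - 1) := by rw [← hgauss]; ring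
  have heq : u * 2 = m - 1 := Nat.eq_of_mul_eq_mul_left hm this
  omega
end

section
/- For every odd positive integer m and every even integer t ≥ 2, there is no (3, mt; m)-CHDM. -/
/-- Lemma 5.7: for every odd positive integer `m` and every even integer `t ≥ 2` there is
no `(3, m*t; m)`-CHDM. -/
theorem no_chdm_3_mt (m t : ℕ) (hm : 0 < m) (hmodd : Odd m) (ht : 2 ≤ t)
    (hteven : Even t) : ¬ ExistsCHDM 3 m t := by
  rintro ⟨D, hD⟩
  classical
  have hn2 : 2 ≤ m * t := le_trans ht (Nat.le_mul_of_pos_left t hm)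
  haveI : NeZero (m * t) := ⟨by omega⟩
  set S := AddSubgroup.zmultiples ((t : ZMod (m * t))) with hS
  set T : ZMod (m * t) := ∑ z ∈ Finset.univ.filter (fun z => z ∉ S), z with hTdef
  -- Step A: each pairwise difference sum equals T
  have hA : ∀ x y : Fin 3, x ≠ y → ∑ j, (D x j - D y j) = T := by
    intro x y hxy
    have h := hD x y hxy
    rw [← Finset.sum_fiberwise' Finset.univ (fun j => D x j - D y j) (fun z => z)]
    have step : ∀ z : ZMod (m * t),
        ∑ j ∈ Finset.univ.filter (fun j => D x j - D y j = z), z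
          = (Finset.univ.filter (fun j => D x j - D y j = z)).card • z := by
      intro z; rw [Finset.sum_const]
    rw [Finset.sum_congr rfl fun z _ => step z]
    rw [hTdef]
    rw [← Finset.sum_subset (Finset.filter_subset (fun z => z ∉ S) Finset.univ)
      (fun z _ hz => by
        have hzS : z ∈ S := by simpa using hz
        rw [(h z).1 hzS, zero_smul])]
    refine Finset.sum_congr rfl fun z hz => ?_
    have hzS : z ∉ S := (Finset.mem_filter.mp hz).2
    rw [(h z).2 hzS, one_smul]
  -- Step B: telescoping gives 3T = 0
  have hT0 : T + T + T = 0 := by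
    have e01 := hA 0 1 (by decide)
    have e12 := hA 1 2 (by decide)
    have e20 := hA 2 0 (by decide)
    calc T + T + T
        = ∑ j, ((D 0 j - D 1 j) + ((D 1 j - D 2 j) + (D 2 j - D 0 j))) := by
          rw [Finset.sum_add_distrib, Finset.sum_add_distrib, e01, e12, e20, add_assoc]
      _ = 0 := by
          apply Finset.sum_eq_zero; intro j _; ring
  -- elements of S killed by 2 are 0
  have hS2 : ∀ a : ZMod (m * t), a ∈ S → a + a = 0 → a = 0 := by
    intro a ha h2
    have hma : m • a = 0 := by
      obtain ⟨k, rfl⟩ := AddSubgroup.mem_zmultiples_iff.mp ha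
      rw [smul_comm]
      have : m • ((t : ZMod (m * t))) = 0 := by
        rw [nsmul_eq_mul, ← Nat.cast_mul, ZMod.natCast_self]
      rw [this, smul_zero]
    have h1 : addOrderOf a ∣ 2 := addOrderOf_dvd_of_nsmul_eq_zero (by rw [two_nsmul]; exact h2)
    have h3 : addOrderOf a ∣ m := addOrderOf_dvd_of_nsmul_eq_zero hma
    have hcop : Nat.Coprime 2 m := Nat.coprime_two_left.mpr hmodd
    have hd1 : addOrderOf a ∣ 1 := hcop ▸ Nat.dvd_gcd h1 h3
    exact AddMonoid.addOrderOf_eq_one_iff.mp (Nat.dvd_one.mp hd1)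
  -- sum over S is zero
  have hSsum : ∑ z ∈ Finset.univ.filter (fun z => z ∈ S), z = 0 := by
    apply Finset.sum_involution (fun a _ => -a)
    · intro a _; exact add_neg_cancel a
    · intro a ha h0 he
      exact h0 (hS2 a (by simpa using ha) (by linear_combination -he))
    · intro a _; exact neg_neg a
    · intro a ha; simp only [Finset.mem_filter, Finset.mem_univ, true_and] at ha ⊢
      exact neg_mem ha
  -- total sum of ZMod (m*t)
  obtain ⟨r, hr⟩ := hteven
  have hr1 : 1 ≤ r := by omega
  have hnn : m * t = 2 * (m * r) := by rw [hr]; ring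
  have hrange : ∑ i ∈ Finset.range (m * t), i = (m * r) * (m * t - 1) := by
    apply Nat.eq_of_mul_eq_mul_right (show 0 < 2 by norm_num)
    rw [Finset.sum_range_id_mul_two]
    have key : ∀ n s : ℕ, n = 2 * s → n * (n - 1) = s * (n - 1) * 2 := by
      intro n s h
      rw [h]
      set c := 2 * s - 1
      ring
    exact key _ _ hnn
  have hU : ∑ z : ZMod (m * t), z = (((m * r) * (m * t - 1) : ℕ) : ZMod (m * t)) := by
    rw [← hrange, Nat.cast_sum]
    apply Finset.sum_nbij' (fun z => (ZMod.val z : ℕ)) (fun i => (i : ZMod (m * t)))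
    · intro a _; exact Finset.mem_range.mpr (ZMod.val_lt a)
    · intro a _; exact Finset.mem_univ _
    · intro a _; exact ZMod.natCast_zmod_val a
    · intro a ha; exact ZMod.val_cast_of_lt (Finset.mem_range.mp ha)
    · intro a _; rw [ZMod.natCast_zmod_val a]
  have hTval : T = (((m * r) * (m * t - 1) : ℕ) : ZMod (m * t)) := by
    have h := Finset.sum_filter_add_sum_filter_not Finset.univ
      (fun z : ZMod (m * t) => z ∈ S) (fun z => z)
    rw [hSsum, zero_add] at h
    rw [hTdef, ← hU, ← h]
  -- conclude
  have hz : ((3 * ((m * r) * (m * t - 1)) : ℕ) : ZMod (m * t)) = 0 := by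
    push_cast
    rw [hTval] at hT0
    push_cast at hT0
    linear_combination hT0
  have hdvd : m * t ∣ 3 * ((m * r) * (m * t - 1)) :=
    (ZMod.natCast_eq_zero_iff _ _).mp hz
  have final : ∀ n s : ℕ, 1 ≤ s → n = 2 * s → n ∣ 3 * (s * (n - 1)) → False := by
    intro n s h1 hns hd
    rw [hns, show 3 * (s * (2 * s - 1)) = (3 * (2 * s - 1)) * s from by ring] at hd
    have h2 : (2 : ℕ) ∣ 3 * (2 * s - 1) := (Nat.mul_dvd_mul_iff_right h1).mp hd
    obtain ⟨q, hq⟩ := h2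
    omega
  exact final (m * t) (m * r) (Nat.mul_pos hm hr1) hnn hdvd
end

section
/- Let p ≥ 5 be a prime. Then there exists x ∈ Z_p such that x is a quadratic non-residue modulo p, x + 1 is a quadratic non-residue modulo p, and x − 1 is a nonzero quadratic residue modulo p; that is, x ≠ 0 and x is not a square in Z_p, x + 1 ≠ 0 and x + 1 is not a square in Z_p, and x − 1 ≠ 0 and x − 1 is a square in Z_p. -/
/-!
For the quadratic character `χ` of a finite field of odd characteristic, the Jacobi sum
`J(χ, χ) = -χ(-1)` gives `∑ χ(x) χ(x + 1) = -1`, hence `∑ (1 - χ(x)) (1 - χ(x + 1)) = q - 1`.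
Only `x = -1` can contribute to this sum without `x` and `x + 1` both being non-residues, and it
contributes at most `2`; so for `q > 3` consecutive non-residues exist. In `ZMod p` every element
is the cast of a natural number, and the least `n : ℕ` with `n` and `n + 1` non-residues has
`n - 1` a residue by minimality.
-/

open Finset

section QuadraticChar

variable {F : Type*} [Field F] [Fintype F] [DecidableEq F]

theorem jacobiSum_quadraticChar_self (hF : ringChar F ≠ 2) :
    jacobiSum (quadraticChar F) (quadraticChar F) = -quadraticChar F (-1) := by
  simpa only [(quadraticChar_isQuadratic F).inv] using
    jacobiSum_nontrivial_inv (quadraticChar_ne_one hF)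

theorem sum_quadraticChar_mul_quadraticChar_add_one (hF : ringChar F ≠ 2) :
    ∑ x : F, quadraticChar F x * quadraticChar F (x + 1) = -1 := by
  set χ := quadraticChar F
  have hneg : ∑ x : F, χ x * χ (x + 1) = χ (-1) * jacobiSum χ χ := by
    rw [jacobiSum, mul_sum, ← Equiv.sum_comp (Equiv.neg F)]
    refine sum_congr rfl fun x _ => ?_
    rw [Equiv.neg_apply, ← mul_assoc, ← map_mul χ (-1) x, neg_one_mul, neg_add_eq_sub]
  have hsq : χ (-1) * χ (-1) = 1 := by rw [← map_mul, neg_mul_neg, one_mul, map_one]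
  rw [hneg, jacobiSum_quadraticChar_self hF, mul_neg, hsq]

theorem sum_one_sub_quadraticChar_mul_one_sub_quadraticChar_add_one (hF : ringChar F ≠ 2) :
    ∑ x : F, (1 - quadraticChar F x) * (1 - quadraticChar F (x + 1)) =
      (Fintype.card F : ℤ) - 1 := by
  have hshift : ∑ x : F, quadraticChar F (x + 1) = 0 :=
    (Equiv.sum_comp (Equiv.addRight (1 : F)) (quadraticChar F)).trans (quadraticChar_sum_zero hF)
  simp only [sub_mul, one_mul, mul_sub, mul_one, sum_sub_distrib, sum_const, card_univ,
    nsmul_eq_mul, quadraticChar_sum_zero hF, hshift,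
    sum_quadraticChar_mul_quadraticChar_add_one hF]
  ring

end QuadraticChar

theorem exists_not_isSquare_and_not_isSquare_add_one {F : Type*} [Field F] [Fintype F]
    (hF : ringChar F ≠ 2) (hcard : 3 < Fintype.card F) : ∃ x : F, ¬IsSquare x ∧ ¬IsSquare (x + 1) := by
  classical
  set χ := quadraticChar F
  have hrest : ∑ x ∈ univ.erase (-1), (1 - χ x) * (1 - χ (x + 1)) ≠ 0 := by
    have htotal := sum_erase_add univ (fun x => (1 - χ x) * (1 - χ (x + 1))) (mem_univ (-1))
    rw [sum_one_sub_quadraticChar_mul_one_sub_quadraticChar_add_one hF, neg_add_cancel,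
      quadraticChar_zero, sub_zero, mul_one] at htotal
    have hcard' : (3 : ℤ) < Fintype.card F := by exact_mod_cast hcard
    rcases quadraticChar_dichotomy (neg_ne_zero.mpr (one_ne_zero (α := F))) with h | h <;>
      rw [h] at htotal <;> omega
  obtain ⟨x, hx, hterm⟩ := exists_ne_zero_of_sum_ne_zero hrest
  obtain ⟨hχx, hχx1⟩ := mul_ne_zero_iff.mp hterm
  have hx1 : x + 1 ≠ 0 := fun h => (mem_erase.mp hx).1 (eq_neg_of_add_eq_zero_left h)
  have hx0 : x ≠ 0 := by rintro rfl; simp [χ] at hχx1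
  exact ⟨x, fun hsq => hχx (sub_eq_zero.mpr ((quadraticChar_one_iff_isSquare hx0).mpr hsq).symm),
    fun hsq => hχx1 (sub_eq_zero.mpr ((quadraticChar_one_iff_isSquare hx1).mpr hsq).symm)⟩

theorem exists_natCast_not_isSquare_pair_isSquare_sub_one {R : Type*} [Ring R]
    (h : ∃ n : ℕ, ¬IsSquare (n : R) ∧ ¬IsSquare ((n : R) + 1)) :
    ∃ n : ℕ, ¬IsSquare (n : R) ∧ ¬IsSquare ((n : R) + 1) ∧ IsSquare ((n : R) - 1) := by
  classical
  obtain ⟨hn, hn1⟩ := Nat.find_spec h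
  refine ⟨Nat.find h, hn, hn1, ?_⟩
  obtain ⟨m, hm⟩ : ∃ m, Nat.find h = m + 1 :=
    Nat.exists_eq_succ_of_ne_zero fun h0 => hn (by rw [h0, Nat.cast_zero]; exact IsSquare.zero)
  have hmin := Nat.find_min h (hm ▸ Nat.lt_succ_self m : m < Nat.find h)
  rw [hm, Nat.cast_succ] at hn
  rw [hm, Nat.cast_succ, add_sub_cancel_right]
  by_contra hsq
  exact hmin ⟨hsq, hn⟩

/-- Lemma 6.8: for every prime `p ≥ 5` there exists `x ∈ ZMod p` such that `x` and
`x + 1` are quadratic non-residues and `x - 1` is a nonzero quadratic residue. -/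
theorem exists_special_element (p : ℕ) (hp : p.Prime) (h5 : 5 ≤ p) :
    ∃ x : ZMod p, x ≠ 0 ∧ ¬ IsSquare x ∧ (x + 1) ≠ 0 ∧ ¬ IsSquare (x + 1) ∧
      (x - 1) ≠ 0 ∧ IsSquare (x - 1) := by
  have : Fact p.Prime := ⟨hp⟩
  have hchar : ringChar (ZMod p) ≠ 2 := by rw [ZMod.ringChar_zmod_n]; omega
  have hcard : 3 < Fintype.card (ZMod p) := by rw [ZMod.card]; omega
  obtain ⟨x, hx, hx1⟩ := exists_not_isSquare_and_not_isSquare_add_one hchar hcard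
  obtain ⟨n, hn, hn1, hn_sub⟩ := exists_natCast_not_isSquare_pair_isSquare_sub_one
    ⟨x.val, by rwa [ZMod.natCast_zmod_val], by rwa [ZMod.natCast_zmod_val]⟩
  have ne_zero_of_not_isSquare {a : ZMod p} (ha : ¬IsSquare a) : a ≠ 0 :=
    fun h => ha (h ▸ IsSquare.zero)
  exact ⟨n, ne_zero_of_not_isSquare hn, hn, ne_zero_of_not_isSquare hn1, hn1,
    sub_ne_zero.mpr fun h => hn (h ▸ IsSquare.one), hn_sub⟩
end
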